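/- Let (X,d) be a starry metric space and d ∈ ℕ. Then there is no Ψ-quasisymmetric homeomorphism of X onto a subset of Euclidean space ℝ^d (with the Euclidean metric), for any increasing function Ψ : (0,∞) → (0,∞); in particular there is no bi-Lipschitz embedding of X into ℝ^d. -/
import Mathlib


open Metric Set

/-- A metric space contains an `(A,η)`-approximate `n`-star. -/
def HasApproxStar (X : Type*) [PseudoMetricSpace X] (A η : ℝ) (n : ℕ) : Prop :=
  ∃ ρ : ℝ, 0 < ρ ∧ ∃ x : Fin (n + 1) → X,
    (∀ i j : Fin (n + 1), i ≠ 0 → j ≠ 0 → i ≠ j →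
      (A - η) * ρ ≤ dist (x i) (x j) ∧ dist (x i) (x j) ≤ A * ρ) ∧
    (∀ i : Fin (n + 1), i ≠ 0 → ρ ≤ dist (x 0) (x i) ∧ dist (x 0) (x i) ≤ (1 + η) * ρ)

/-- A metric space is starry if there are uniform `A > 1` and `0 < η < (A-1)/2` such that for
every `n` the space contains an `(Aₙ,η)`-approximate `n`-star for some `Aₙ ≥ A`. -/
def Starry (X : Type*) [PseudoMetricSpace X] : Prop :=
  ∃ A η : ℝ, 1 < A ∧ 0 < η ∧ η < (A - 1) / 2 ∧
    ∀ n : ℕ, ∃ An : ℝ, A ≤ An ∧ HasApproxStar X An η n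

/-- `Ψ` is an increasing function `(0,∞) → (0,∞)`. -/
def IncreasingOnPos (Ψ : ℝ → ℝ) : Prop :=
  (∀ t : ℝ, 0 < t → 0 < Ψ t) ∧ StrictMonoOn Ψ (Set.Ioi 0)

/-- A map `φ` is `Ψ`-quasisymmetric. -/
def IsQuasisymmetric {X Y : Type*} [PseudoMetricSpace X] [PseudoMetricSpace Y]
    (φ : X → Y) (Ψ : ℝ → ℝ) : Prop :=
  ∀ x y z : X, x ≠ y → x ≠ z → y ≠ z →
    dist (φ x) (φ y) / dist (φ x) (φ z) ≤ Ψ (dist x y / dist x z)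

/-- A metric space is doubling: there is `K > 0` such that every closed ball `B(x,r)` can be
covered by at most `K` closed balls of radius `r/2`. -/
def DoublingSpace (X : Type*) [PseudoMetricSpace X] : Prop :=
  ∃ K : ℕ, 0 < K ∧ ∀ (x : X) (r : ℝ), 0 < r →
    ∃ s : Finset X, s.card ≤ K ∧ closedBall x r ⊆ ⋃ y ∈ s, closedBall y (r / 2)

lemma packing_lemma (d : ℕ) (R ε : ℝ) (hε : 0 < ε) :
    ∃ N : ℕ, ∀ n : ℕ, ∀ z : Fin n → EuclideanSpace ℝ (Fin d),
      (∀ i, z i ∈ closedBall (0 : EuclideanSpace ℝ (Fin d)) R) →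
      (∀ i j, i ≠ j → ε ≤ dist (z i) (z j)) → n ≤ N := by
  obtain ⟨t, -, htf, htc⟩ :=
    (isCompact_closedBall (0 : EuclideanSpace ℝ (Fin d)) R).finite_cover_balls
      (e := ε / 2) (by positivity)
  refine ⟨htf.toFinset.card, fun n z hz hsep => ?_⟩
  choose g hg1 hg2 using fun i => mem_iUnion₂.mp (htc (hz i))
  have hginj : Function.Injective g := by
    intro i j hij
    by_contra hne
    have h1 : dist (z i) (z j) ≤ dist (z i) (g i) + dist (g j) (z j) := by
      rw [hij]; exact dist_triangle _ _ _
    have h2 := mem_ball.mp (hg2 i)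
    have h3 := mem_ball.mp (hg2 j)
    have := hsep i j hne
    rw [dist_comm (g j)] at h1
    linarith
  have : Fintype.card (Fin n) ≤ Fintype.card htf.toFinset := by
    apply Fintype.card_le_of_injective (fun i => ⟨g i, htf.mem_toFinset.mpr (hg1 i)⟩)
    intro i j h
    exact hginj (congrArg Subtype.val h)
  simpa [Fintype.card_coe] using this

/-- A starry metric space admits no `Ψ`-quasisymmetric homeomorphism onto a
subset of Euclidean space `ℝ^d`, for any increasing `Ψ : (0,∞) → (0,∞)`; in particular it
admits no bi-Lipschitz embedding into `ℝ^d`. -/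
theorem starry_no_quasisymmetric_embedding_into_euclidean
    {X : Type*} [MetricSpace X] (hX : Starry X) (d : ℕ) :
    (∀ (s : Set (EuclideanSpace ℝ (Fin d))) (φ : X ≃ₜ s) (Ψ : ℝ → ℝ),
      IncreasingOnPos Ψ → ¬ IsQuasisymmetric (fun x => (φ x : EuclideanSpace ℝ (Fin d))) Ψ) ∧
    (∀ ψ : X → EuclideanSpace ℝ (Fin d),
      ¬ ∃ C : ℝ, 1 ≤ C ∧ ∀ x y : X,
        C⁻¹ * dist x y ≤ dist (ψ x) (ψ y) ∧ dist (ψ x) (ψ y) ≤ C * dist x y) := by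
  obtain ⟨A, η, hA, hη, hη2, hstar⟩ := hX
  have hAη : (0:ℝ) < A - η := by linarith
  have h1η : (0:ℝ) < 1 + η := by linarith
  constructor
  · -- quasisymmetric part
    intro s φ Ψ hΨ hqs
    set c₁ := Ψ (1 + η) with hc₁def
    set c₂ := Ψ ((1 + η) / (A - η)) with hc₂def
    have hc₁ : 0 < c₁ := hΨ.1 _ h1η
    have hc₂ : 0 < c₂ := hΨ.1 _ (by positivity)
    obtain ⟨N, hN⟩ := packing_lemma d (max c₁ 1) (1 / (c₁ * c₂)) (by positivity)
    obtain ⟨An, hAn, ρ, hρ, x, hx1, hx2⟩ := hstar (N + 1)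
    have hAnη : (0:ℝ) < An - η := by linarith
    -- distinctness of star points
    have hxne0 : ∀ i : Fin (N+2), i ≠ 0 → x 0 ≠ x i := by
      intro i hi
      exact dist_pos.mp (lt_of_lt_of_le hρ (hx2 i hi).1)
    have hxnet : ∀ i j : Fin (N+2), i ≠ 0 → j ≠ 0 → i ≠ j → x i ≠ x j := by
      intro i j hi hj hij
      exact dist_pos.mp (lt_of_lt_of_le (by positivity) (hx1 i j hi hj hij).1)
    set Y : Fin (N+2) → EuclideanSpace ℝ (Fin d) := fun i => (φ (x i) : EuclideanSpace ℝ (Fin d)) with hYdef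
    have hφinj : Function.Injective (fun a : X => (φ a : EuclideanSpace ℝ (Fin d))) := by
      intro a b h
      exact φ.injective (Subtype.coe_injective h)
    have hYpos : ∀ i j : Fin (N+2), x i ≠ x j → 0 < dist (Y i) (Y j) := by
      intro i j h
      exact dist_pos.mpr fun he => h (hφinj he)
    set D : Fin (N+2) → ℝ := fun i => dist (Y 0) (Y i) with hDdef
    -- hub comparability
    have hub : ∀ i j : Fin (N+2), i ≠ 0 → j ≠ 0 → i ≠ j → D i ≤ c₁ * D j := by
      intro i j hi hj hij
      have h0i := hxne0 i hi
      have h0j := hxne0 j hj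
      have hijx := hxnet i j hi hj hij
      have hq := hqs (x 0) (x i) (x j) h0i h0j hijx
      have hr : 0 < dist (x 0) (x i) / dist (x 0) (x j) := by
        have := dist_pos.mpr h0i
        have := dist_pos.mpr h0j
        positivity
      have hrle : dist (x 0) (x i) / dist (x 0) (x j) ≤ 1 + η := by
        rw [div_le_iff₀ (dist_pos.mpr h0j)]
        calc dist (x 0) (x i) ≤ (1 + η) * ρ := (hx2 i hi).2
          _ ≤ (1 + η) * dist (x 0) (x j) := by
              have := (hx2 j hj).1
              nlinarith
      have hmono : Ψ (dist (x 0) (x i) / dist (x 0) (x j)) ≤ c₁ :=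
        hΨ.2.monotoneOn (mem_Ioi.mpr hr) (mem_Ioi.mpr h1η) hrle
      have := le_trans hq hmono
      exact (div_le_iff₀ (hYpos 0 j h0j)).mp this
    -- separation
    have sep : ∀ i j : Fin (N+2), i ≠ 0 → j ≠ 0 → i ≠ j → D i ≤ c₂ * dist (Y i) (Y j) := by
      intro i j hi hj hij
      have h0i := hxne0 i hi
      have h0j := hxne0 j hj
      have hijx := hxnet i j hi hj hij
      have hq := hqs (x i) (x 0) (x j) (Ne.symm h0i) hijx h0j
      have hdij : 0 < dist (x i) (x j) := dist_pos.mpr hijx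
      have hr : 0 < dist (x i) (x 0) / dist (x i) (x j) := by
        have := dist_pos.mpr (Ne.symm h0i)
        positivity
      have hrle : dist (x i) (x 0) / dist (x i) (x j) ≤ (1 + η) / (A - η) := by
        have h1 : dist (x i) (x 0) ≤ (1 + η) * ρ := by
          rw [dist_comm]; exact (hx2 i hi).2
        have h2 : (A - η) * ρ ≤ dist (x i) (x j) := by
          have := (hx1 i j hi hj hij).1
          nlinarith
        calc dist (x i) (x 0) / dist (x i) (x j) ≤ ((1 + η) * ρ) / ((A - η) * ρ) :=
              div_le_div₀ (by positivity) h1 (by positivity) h2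
          _ = (1 + η) / (A - η) := mul_div_mul_right _ _ (ne_of_gt hρ)
      have hmono : Ψ (dist (x i) (x 0) / dist (x i) (x j)) ≤ c₂ :=
        hΨ.2.monotoneOn (mem_Ioi.mpr hr) (mem_Ioi.mpr (by positivity)) hrle
      have hle := le_trans hq hmono
      have := (div_le_iff₀ (hYpos i j hijx)).mp hle
      calc D i = dist (Y i) (Y 0) := dist_comm _ _
        _ ≤ c₂ * dist (Y i) (Y j) := this
    have h10 : (1 : Fin (N+2)) ≠ 0 := by simp [Fin.ext_iff]
    have hD₁ : 0 < D 1 := hYpos 0 1 (hxne0 1 h10)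
    set z : Fin (N+1) → EuclideanSpace ℝ (Fin d) :=
      fun i => (D 1)⁻¹ • (Y i.succ - Y 0) with hzdef
    have hzdist : ∀ i j : Fin (N+1),
        dist (z i) (z j) = (D 1)⁻¹ * dist (Y i.succ) (Y j.succ) := by
      intro i j
      simp only [hzdef, dist_smul₀, dist_sub_right, Real.norm_eq_abs,
        abs_of_pos (inv_pos.mpr hD₁)]
    have hznorm : ∀ i : Fin (N+1), dist (z i) 0 = (D 1)⁻¹ * D i.succ := by
      intro i
      rw [dist_zero_right]
      simp only [hzdef, norm_smul, Real.norm_eq_abs, abs_of_pos (inv_pos.mpr hD₁)]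
      rw [← dist_eq_norm, dist_comm]
    -- key separation estimate
    have key : ∀ i j : Fin (N+1), i ≠ j → i.succ ≠ 1 →
        D 1 ≤ (c₁ * c₂) * dist (Y i.succ) (Y j.succ) := by
      intro i j hij h1
      have hsij : i.succ ≠ j.succ := fun h => hij (Fin.succ_injective _ h)
      have h1le : D 1 ≤ c₁ * D i.succ :=
        hub 1 i.succ h10 (Fin.succ_ne_zero i) (Ne.symm h1)
      have h2le : D i.succ ≤ c₂ * dist (Y i.succ) (Y j.succ) :=
        sep i.succ j.succ (Fin.succ_ne_zero i) (Fin.succ_ne_zero j) hsij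
      nlinarith
    have := hN (N+1) z ?_ ?_
    · omega
    · -- membership in ball
      intro i
      rw [mem_closedBall, hznorm i]
      by_cases h : i.succ = 1
      · rw [h]
        rw [inv_mul_cancel₀ (ne_of_gt hD₁)]
        exact le_max_right _ _
      · have : D i.succ ≤ c₁ * D 1 := hub i.succ 1 (Fin.succ_ne_zero i) h10 h
        have h2 : (D 1)⁻¹ * D i.succ ≤ (D 1)⁻¹ * (c₁ * D 1) :=
          mul_le_mul_of_nonneg_left this (inv_nonneg.mpr hD₁.le)
        have h3 : (D 1)⁻¹ * (c₁ * D 1) = c₁ := by field_simp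
        rw [h3] at h2
        exact le_trans h2 (le_max_left _ _)
    · -- separation
      intro i j hij
      rw [hzdist i j]
      have hkey : D 1 ≤ (c₁ * c₂) * dist (Y i.succ) (Y j.succ) := by
        by_cases h : i.succ = 1
        · have hj1 : j.succ ≠ 1 := by
            intro hj; exact hij (Fin.succ_injective _ (h.trans hj.symm))
          rw [dist_comm]
          exact key j i (Ne.symm hij) hj1
        · exact key i j hij h
      rw [div_le_iff₀ (by positivity)]
      have h9 := mul_le_mul_of_nonneg_left hkey (inv_nonneg.mpr hD₁.le)
      rw [inv_mul_cancel₀ (ne_of_gt hD₁)] at h9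
      nlinarith
  · -- bi-Lipschitz part
    rintro ψ ⟨C, hC, hbl⟩
    have hC0 : (0:ℝ) < C := lt_of_lt_of_le one_pos hC
    obtain ⟨N, hN⟩ := packing_lemma d (C * (1 + η)) (C⁻¹ * (A - η)) (by positivity)
    obtain ⟨An, hAn, ρ, hρ, x, hx1, hx2⟩ := hstar (N + 1)
    set z : Fin (N+1) → EuclideanSpace ℝ (Fin d) :=
      fun i => ρ⁻¹ • (ψ (x i.succ) - ψ (x 0)) with hzdef
    have := hN (N+1) z ?_ ?_
    · omega
    · intro i
      rw [mem_closedBall, dist_zero_right]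
      have : ‖z i‖ = ρ⁻¹ * dist (ψ (x i.succ)) (ψ (x 0)) := by
        simp only [hzdef, norm_smul, Real.norm_eq_abs, abs_of_pos (inv_pos.mpr hρ)]
        rw [← dist_eq_norm]
      rw [this]
      have h1 : dist (ψ (x i.succ)) (ψ (x 0)) ≤ C * ((1 + η) * ρ) := by
        calc dist (ψ (x i.succ)) (ψ (x 0)) ≤ C * dist (x i.succ) (x 0) :=
              (hbl _ _).2
          _ ≤ C * ((1 + η) * ρ) := by
              have := (hx2 i.succ (Fin.succ_ne_zero i)).2
              rw [dist_comm] at this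
              nlinarith
      calc ρ⁻¹ * dist (ψ (x i.succ)) (ψ (x 0)) ≤ ρ⁻¹ * (C * ((1 + η) * ρ)) :=
            mul_le_mul_of_nonneg_left h1 (inv_nonneg.mpr hρ.le)
        _ = C * (1 + η) := by field_simp
    · intro i j hij
      have hsij : i.succ ≠ j.succ := fun h => hij (Fin.succ_injective _ h)
      have hd : dist (z i) (z j) = ρ⁻¹ * dist (ψ (x i.succ)) (ψ (x j.succ)) := by
        simp only [hzdef, dist_smul₀, dist_sub_right, Real.norm_eq_abs,
          abs_of_pos (inv_pos.mpr hρ)]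
      rw [hd]
      have h1 : C⁻¹ * ((A - η) * ρ) ≤ dist (ψ (x i.succ)) (ψ (x j.succ)) := by
        calc C⁻¹ * ((A - η) * ρ) ≤ C⁻¹ * dist (x i.succ) (x j.succ) := by
              have h6 := (hx1 i.succ j.succ (Fin.succ_ne_zero i) (Fin.succ_ne_zero j) hsij).1
              have hi : (0:ℝ) < C⁻¹ := inv_pos.mpr hC0
              have h7 : (A - η) * ρ ≤ (An - η) * ρ := by nlinarith
              exact mul_le_mul_of_nonneg_left (le_trans h7 h6) hi.le
          _ ≤ dist (ψ (x i.succ)) (ψ (x j.succ)) := (hbl _ _).1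
      calc C⁻¹ * (A - η) = ρ⁻¹ * (C⁻¹ * ((A - η) * ρ)) := by field_simp
        _ ≤ ρ⁻¹ * dist (ψ (x i.succ)) (ψ (x j.succ)) :=
            mul_le_mul_of_nonneg_left h1 (inv_nonneg.mpr hρ.le)
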